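/- Let n ≥ 3 be odd and define the Markov kernel K on {0,1,…,n-1} by K(0,1)=1; K(a,a-1) = (1/2)(1 - 1/(a+1)) and K(a,a+1) = (1/2)(1 + 1/(a+1)) for 1 ≤ a ≤ n-2; K(n-1,n-2) = 1 - 1/n and K(n-1,0) = 1/n; all other entries 0. Then the distribution π with π(j) = 2(j+1)/n² for 0 ≤ j ≤ n-2 and π(n-1) = 1/n is a stationary distribution: π(j) ≥ 0, Σ_j π(j) = 1, and Σ_x π(x)K(x,y) = π(y) for all y. -/

import Mathlib

open scoped BigOperators

/-- The tensor-product Markov kernel on the irreducibles of `u_ξ(sl₂)`, `n` odd. -/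
noncomputable def quantumK (n : ℕ) : Fin n → Fin n → ℝ := fun a b =>
  if (a : ℕ) = 0 then (if (b : ℕ) = 1 then 1 else 0)
  else if (a : ℕ) = n - 1 then
    (if (b : ℕ) = n - 2 then 1 - 1 / (n : ℝ) else if (b : ℕ) = 0 then 1 / (n : ℝ) else 0)
  else if (b : ℕ) = (a : ℕ) - 1 then (1 / 2) * (1 - 1 / ((a : ℕ) + 1 : ℝ))
  else if (b : ℕ) = (a : ℕ) + 1 then (1 / 2) * (1 + 1 / ((a : ℕ) + 1 : ℝ))
  else 0

/-- The stationary distribution of the quantum `sl₂` tensor chain. -/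
noncomputable def quantumPi (n : ℕ) : Fin n → ℝ := fun j =>
  if (j : ℕ) = n - 1 then 1 / (n : ℝ) else 2 * ((j : ℕ) + 1 : ℝ) / (n : ℝ) ^ 2

lemma gauss_sum_real (m : ℕ) : ∑ j ∈ Finset.range m, ((j : ℝ) + 1) = m * (m + 1) / 2 := by
  induction m with
  | zero => simp
  | succ k ih =>
    rw [Finset.sum_range_succ, ih]
    push_cast
    ring

lemma finmk_ne {n a b : ℕ} (ha : a < n) (hb : b < n) (h : a ≠ b) :
    (⟨a, ha⟩ : Fin n) ≠ ⟨b, hb⟩ := Fin.ne_of_val_ne h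

lemma finmk_val_ne {n a : ℕ} {c : Fin n} (ha : a < n) (h : c ≠ ⟨a, ha⟩) : (c : ℕ) ≠ a :=
  fun hv => h (Fin.ext hv)

set_option maxHeartbeats 1600000 in
theorem quantum_stationary (n : ℕ) (hn : 3 ≤ n) (hodd : Odd n) :
    (∀ j, 0 ≤ quantumPi n j) ∧ (∑ j, quantumPi n j = 1) ∧
      (∀ y, ∑ x, quantumPi n x * quantumK n x y = quantumPi n y) := by
  have hn3 : (3 : ℝ) ≤ (n : ℝ) := by exact_mod_cast hn
  have hnR : (n : ℝ) ≠ 0 := by linarith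
  refine ⟨?_, ?_, ?_⟩
  · intro j
    unfold quantumPi
    have := j.isLt
    split_ifs
    · positivity
    · have h0 : (0:ℝ) ≤ ((j:ℕ):ℝ) := by positivity
      positivity
  · obtain ⟨m, rfl⟩ : ∃ m, n = m + 1 := ⟨n - 1, by omega⟩
    rw [Fin.sum_univ_castSucc]
    have hlast : quantumPi (m + 1) (Fin.last m) = 1 / ((m : ℝ) + 1) := by
      simp [quantumPi]
    have hcs : ∀ j : Fin m,
        quantumPi (m + 1) j.castSucc = 2 * (((j : ℕ) : ℝ) + 1) / ((m : ℝ) + 1) ^ 2 := by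
      intro j
      have := j.isLt
      simp only [quantumPi, Fin.coe_castSucc]
      rw [if_neg (by omega)]
      push_cast
      ring
    rw [hlast, Finset.sum_congr rfl fun j _ => hcs j]
    rw [Fin.sum_univ_eq_sum_range (fun j => 2 * ((j : ℝ) + 1) / ((m : ℝ) + 1) ^ 2)]
    have : ∑ j ∈ Finset.range m, 2 * ((j : ℝ) + 1) / ((m : ℝ) + 1) ^ 2
        = (∑ j ∈ Finset.range m, ((j : ℝ) + 1)) * (2 / ((m : ℝ) + 1) ^ 2) := by
      rw [Finset.sum_mul]
      exact Finset.sum_congr rfl fun j _ => by ring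
    rw [this, gauss_sum_real]
    have hm : ((m : ℝ) + 1) ≠ 0 := by positivity
    field_simp
  · intro y
    have hylt := y.isLt
    by_cases hy0 : (y : ℕ) = 0
    · -- contributions from x = 1 and x = n-1
      rw [Finset.sum_eq_add_of_mem (⟨1, by omega⟩ : Fin n) (⟨n - 1, by omega⟩ : Fin n)
          (Finset.mem_univ _) (Finset.mem_univ _) (finmk_ne _ _ (by omega)) ?_]
      · simp only [quantumPi, quantumK, Fin.val_mk]
        rw [hy0]
        split_ifs <;> try first | exact (‹False›).elim | omega
        push_cast
        field_simp
        ring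
      · intro c _ hc
        obtain ⟨hc1, hc2⟩ := hc
        have hc1' := finmk_val_ne _ hc1; have hc2' := finmk_val_ne _ hc2
        have hcl := c.isLt
        have hK : quantumK n c y = 0 := by
          simp only [quantumK]
          split_ifs <;> first | rfl | omega | exact (‹False›).elim
        rw [hK, mul_zero]
    · by_cases hyl : (y : ℕ) = n - 1
      · -- single contribution from x = n-2
        rw [Finset.sum_eq_single_of_mem (⟨n - 2, by omega⟩ : Fin n) (Finset.mem_univ _) ?_]
        · simp only [quantumPi, quantumK, Fin.val_mk]
          rw [hyl]
          split_ifs <;> try first | exact (‹False›).elim | omega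
          rw [Nat.cast_sub (by omega : 2 ≤ n)]
          have h1 : (n : ℝ) - 2 + 1 ≠ 0 := by push_cast; linarith
          push_cast
          field_simp
          ring
        · intro c _ hc1
          have hc1' := finmk_val_ne _ hc1
          have hcl := c.isLt
          have hK : quantumK n c y = 0 := by
            simp only [quantumK]
            split_ifs <;> first | rfl | omega | exact (‹False›).elim
          rw [hK, mul_zero]
      · by_cases hyl2 : (y : ℕ) = n - 2
        · by_cases h3 : n = 3
          · subst h3
            have hy : y = ⟨1, by norm_num⟩ := Fin.ext (show (y : ℕ) = 1 by omega)
            subst hy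
            rw [Fin.sum_univ_three]
            norm_num [quantumPi, quantumK, Fin.val_zero, Fin.val_one, Fin.val_mk]
          ·
            have hn4 : 4 ≤ n := by omega
            rw [Finset.sum_eq_add_of_mem (⟨n - 3, by omega⟩ : Fin n) (⟨n - 1, by omega⟩ : Fin n)
                (Finset.mem_univ _) (Finset.mem_univ _) (finmk_ne _ _ (by omega)) ?_]
            · simp only [quantumPi, quantumK, Fin.val_mk]
              rw [hyl2]
              split_ifs <;> try first | exact (‹False›).elim | omega
              rw [Nat.cast_sub (by omega : 3 ≤ n), Nat.cast_sub (by omega : 2 ≤ n)]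
              have h1 : (n : ℝ) - 3 + 1 ≠ 0 := by push_cast; linarith
              push_cast
              field_simp
              ring
            · intro c _ hc
              obtain ⟨hc1, hc2⟩ := hc
              have hc1' := finmk_val_ne _ hc1; have hc2' := finmk_val_ne _ hc2
              have hcl := c.isLt
              have hK : quantumK n c y = 0 := by
                simp only [quantumK]
                split_ifs <;> first | rfl | omega | exact (‹False›).elim
              rw [hK, mul_zero]
        · by_cases hy1 : (y : ℕ) = 1
          · -- contributions from x = 0 and x = 2
            have hn4 : 4 ≤ n := by omega
            rw [Finset.sum_eq_add_of_mem (⟨0, by omega⟩ : Fin n) (⟨2, by omega⟩ : Fin n)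
                (Finset.mem_univ _) (Finset.mem_univ _) (finmk_ne _ _ (by omega)) ?_]
            · simp only [quantumPi, quantumK, Fin.val_mk]
              rw [hy1]
              split_ifs <;> try first | exact (‹False›).elim | omega
              push_cast
              field_simp
              ring
            · intro c _ hc
              obtain ⟨hc1, hc2⟩ := hc
              have hc1' := finmk_val_ne _ hc1; have hc2' := finmk_val_ne _ hc2
              have hcl := c.isLt
              have hK : quantumK n c y = 0 := by
                simp only [quantumK]
                split_ifs <;> first | rfl | omega | exact (‹False›).elim
              rw [hK, mul_zero]
          · -- generic: 2 ≤ y ≤ n-3; contributions from x = y-1 and x = y+1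
            have hy2 : 2 ≤ (y : ℕ) := by omega
            have hy3 : (y : ℕ) ≤ n - 3 := by omega
            rw [Finset.sum_eq_add_of_mem (⟨(y : ℕ) - 1, by omega⟩ : Fin n)
                (⟨(y : ℕ) + 1, by omega⟩ : Fin n)
                (Finset.mem_univ _) (Finset.mem_univ _) (finmk_ne _ _ (by omega)) ?_]
            · simp only [quantumPi, quantumK, Fin.val_mk]
              split_ifs <;> try first | exact (‹False›).elim | omega
              rw [Nat.cast_sub (by omega : 1 ≤ (y : ℕ))]
              have hyR : (2 : ℝ) ≤ ((y : ℕ) : ℝ) := by exact_mod_cast hy2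
              have h1 : ((y : ℕ) : ℝ) - 1 + 1 ≠ 0 := by linarith
              have h2 : ((y : ℕ) : ℝ) + 1 + 1 ≠ 0 := by linarith
              push_cast
              field_simp
              ring
            · intro c _ hc
              obtain ⟨hc1, hc2⟩ := hc
              have hc1' := finmk_val_ne _ hc1; have hc2' := finmk_val_ne _ hc2
              have hcl := c.isLt
              have hK : quantumK n c y = 0 := by
                simp only [quantumK]
                split_ifs <;> first | rfl | omega | exact (‹False›).elim
              rw [hK, mul_zero]
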